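/- arXiv:2406.12600 — 4 statements merged into one kernel-verified Lean document; each statement's English description precedes it below -/
import Mathlib

section
/- Blocking concentration inequality: let (ℱ_t)_{t∈ℕ} be a filtration (with ℱ_t trivial for t ≤ 0), let d, K ≥ 1 and n = K·d, and let X_1,…,X_n be real random variables such that each X_t is ℱ_t-measurable, |X_t| ≤ 1 almost surely, and E[X_t | ℱ_{t−d}] ≤ φ almost surely for some φ ≥ 0. Then for every δ ∈ (0,1), with probability at least 1 − δ, (1/n)·Σ_{t=1}^n X_t ≤ φ + √(2 d log(1/δ)/n). -/
/-!
Split `1, …, n` into the `d` residue classes `r, r + d, …, r + (K - 1) d`. Inside one class each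
`X t` is conditioned on the time `t - d` of its predecessor, where its mean is at most `φ`; since
`exp (ν y) ≤ cosh ν + y sinh ν` on `[-1, 1]`, its conditional moment generating function is at most
`exp (ν φ + ν² / 2)`, and the tower property bounds that of the class sum by
`exp (K (ν φ + ν² / 2))`. Convexity of `exp` averages the `d` class bounds into
`E exp (θ ∑ X t) ≤ exp (θ n φ + n d θ² / 2)`, and Chernoff's bound at `θ = ε / d`, for the deviation
`ε = √(2 d log (1 / δ) / n)`, gives the tail `exp (-n ε² / (2 d)) = δ`.
-/

open MeasureTheory Real Finset

namespace Real

lemma sinh_le_mul_cosh {x : ℝ} (hx : 0 ≤ x) : sinh x ≤ x * cosh x := by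
  have hmono : MonotoneOn (fun y => y * cosh y - sinh y) (Set.Ici 0) := by
    refine monotoneOn_of_deriv_nonneg (convex_Ici 0) (by fun_prop) (by fun_prop) fun y hy => ?_
    rw [interior_Ici] at hy
    have hderiv : HasDerivAt (fun y => y * cosh y - sinh y) (y * sinh y) y := by
      refine (((hasDerivAt_id y).mul (hasDerivAt_cosh y)).sub (hasDerivAt_sinh y)).congr_deriv ?_
      simp only [id]
      ring
    rw [hderiv.deriv]
    exact mul_nonneg hy.le (sinh_nonneg_iff.2 hy.le)
  simpa using hmono Set.self_mem_Ici hx hx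

lemma cosh_add_mul_sinh_le_exp {ν φ : ℝ} (hν : 0 ≤ ν) (hφ : 0 ≤ φ) :
    cosh ν + φ * sinh ν ≤ exp (ν * φ + ν ^ 2 / 2) := by
  calc cosh ν + φ * sinh ν
      ≤ cosh ν * (1 + ν * φ) := by nlinarith [sinh_le_mul_cosh hν]
    _ ≤ exp (ν ^ 2 / 2) * exp (ν * φ) := by
        gcongr
        · exact cosh_le_exp_half_sq ν
        · linarith [add_one_le_exp (ν * φ)]
    _ = exp (ν * φ + ν ^ 2 / 2) := by rw [← exp_add, add_comm]

end Real

lemma Finset.sum_range_mul_eq_sum_range_sum_range {M : Type*} [AddCommMonoid M] (g : ℕ → M)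
    (d K : ℕ) : ∑ t ∈ range (K * d), g t = ∑ i ∈ range d, ∑ j ∈ range K, g (j * d + i) := by
  induction K with
  | zero => simp
  | succ K ih => simp only [Nat.succ_mul, sum_range_add, ih, sum_range_succ, sum_add_distrib]

lemma Finset.sum_Icc_one_eq_sum_range {M : Type*} [AddCommMonoid M] (g : ℕ → M) (n : ℕ) :
    ∑ t ∈ Icc 1 n, g t = ∑ t ∈ range n, g (t + 1) := by
  rw [← Ico_add_one_right_eq_Icc, sum_Ico_eq_sum_range]
  simp [add_comm]

lemma Finset.sum_Icc_mul_eq_sum_Icc_sum_range {M : Type*} [AddCommMonoid M] (g : ℕ → M)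
    (d K : ℕ) : ∑ t ∈ Icc 1 (K * d), g t = ∑ r ∈ Icc 1 d, ∑ j ∈ range K, g (j * d + r) := by
  simp only [sum_Icc_one_eq_sum_range, sum_range_mul_eq_sum_range_sum_range (fun t => g (t + 1)),
    add_assoc]

section

open ProbabilityTheory

variable {Ω : Type*} {m mΩ : MeasurableSpace Ω} {μ : Measure Ω}

lemma integrable_exp_mul_sum [IsFiniteMeasure μ] {ι : Type*} {s : Finset ι} {Y : ι → Ω → ℝ}
    (hY : ∀ j ∈ s, AEMeasurable (Y j) μ) (hYb : ∀ j ∈ s, ∀ᵐ ω ∂μ, |Y j ω| ≤ 1) (ν : ℝ) :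
    Integrable (fun ω => exp (ν * ∑ j ∈ s, Y j ω)) μ := by
  refine integrable_exp_mul_of_mem_Icc (a := -#s) (b := #s) (Finset.aemeasurable_fun_sum s hY) ?_
  filter_upwards [(Filter.eventually_all_finset s).2 hYb] with ω hω
  refine abs_le.1 ((abs_sum_le_sum_abs _ _).trans ?_)
  simpa using Finset.sum_le_sum hω

lemma condExp_exp_mul_le [IsFiniteMeasure μ] (hm : m ≤ mΩ) {Y : Ω → ℝ} {φ ν : ℝ}
    (hY : AEMeasurable Y μ) (hYb : ∀ᵐ ω ∂μ, |Y ω| ≤ 1) (hφ : 0 ≤ φ) (hν : 0 ≤ ν)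
    (hc : μ[Y|m] ≤ᵐ[μ] fun _ => φ) :
    μ[fun ω => exp (ν * Y ω)|m] ≤ᵐ[μ] fun _ => exp (ν * φ + ν ^ 2 / 2) := by
  have hYi : Integrable Y μ := Integrable.of_mem_Icc (-1) 1 hY (hYb.mono fun _ => abs_le.1)
  have hexp : Integrable (fun ω => exp (ν * Y ω)) μ :=
    integrable_exp_mul_of_mem_Icc hY (hYb.mono fun _ => abs_le.1)
  have hmono : μ[fun ω => exp (ν * Y ω)|m] ≤ᵐ[μ] μ[fun ω => cosh ν + sinh ν * Y ω|m] := by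
    refine condExp_mono hexp ((integrable_const _).add (hYi.const_mul _)) ?_
    filter_upwards [hYb] with ω hω
    simpa only [mul_comm] using exp_mul_le_cosh_add_mul_sinh hω ν
  have hlin : μ[fun ω => cosh ν + sinh ν * Y ω|m] =ᵐ[μ] fun ω => cosh ν + sinh ν * μ[Y|m] ω := by
    have hsplit : (fun ω => cosh ν + sinh ν * Y ω) = (fun _ => cosh ν) + sinh ν • Y := rfl
    rw [hsplit]
    filter_upwards [condExp_add (integrable_const (cosh ν)) (hYi.smul (sinh ν)) m,
      condExp_smul (sinh ν) Y m] with ω hadd hsmul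
    rw [hadd, Pi.add_apply, hsmul, condExp_const hm]
    rfl
  filter_upwards [hmono, hlin, hc] with ω hmono hlin hc
  calc μ[fun ω => exp (ν * Y ω)|m] ω ≤ cosh ν + sinh ν * μ[Y|m] ω := hmono.trans hlin.le
    _ ≤ cosh ν + φ * sinh ν := by nlinarith [sinh_nonneg_iff.2 hν]
    _ ≤ exp (ν * φ + ν ^ 2 / 2) := cosh_add_mul_sinh_le_exp hν hφ

lemma integral_mul_exp_mul_le [IsFiniteMeasure μ] (hm : m ≤ mΩ) {Y f : Ω → ℝ} {φ ν : ℝ}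
    (hY : AEMeasurable Y μ) (hYb : ∀ᵐ ω ∂μ, |Y ω| ≤ 1) (hφ : 0 ≤ φ) (hν : 0 ≤ ν)
    (hc : μ[Y|m] ≤ᵐ[μ] fun _ => φ) (hf : StronglyMeasurable[m] f) (hf0 : ∀ ω, 0 ≤ f ω)
    (hfi : Integrable f μ) :
    ∫ ω, f ω * exp (ν * Y ω) ∂μ ≤ exp (ν * φ + ν ^ 2 / 2) * ∫ ω, f ω ∂μ := by
  have hexp : Integrable (fun ω => exp (ν * Y ω)) μ :=
    integrable_exp_mul_of_mem_Icc hY (hYb.mono fun _ => abs_le.1)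
  have hexp_bdd : ∀ᵐ ω ∂μ, ‖exp (ν * Y ω)‖ ≤ exp ν := by
    filter_upwards [hYb] with ω hω
    rw [norm_of_nonneg (exp_pos _).le, exp_le_exp]
    nlinarith [abs_le.1 hω]
  have hfe : Integrable (f * fun ω => exp (ν * Y ω)) μ :=
    hfi.mul_bdd (by fun_prop) hexp_bdd
  have hpull := condExp_mul_of_stronglyMeasurable_left hf hfe hexp
  calc ∫ ω, f ω * exp (ν * Y ω) ∂μ = ∫ ω, f ω * μ[fun ω => exp (ν * Y ω)|m] ω ∂μ :=
        (integral_condExp hm).symm.trans (integral_congr_ae hpull)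
    _ ≤ ∫ ω, f ω * exp (ν * φ + ν ^ 2 / 2) ∂μ := by
        refine integral_mono_ae (integrable_condExp.congr hpull) (hfi.mul_const _) ?_
        filter_upwards [condExp_exp_mul_le hm hY hYb hφ hν hc] with ω hω
        exact mul_le_mul_of_nonneg_left hω (hf0 ω)
    _ = exp (ν * φ + ν ^ 2 / 2) * ∫ ω, f ω ∂μ := by rw [integral_mul_const, mul_comm]

theorem integral_exp_mul_sum_range_le [IsProbabilityMeasure μ] (𝒢 : Filtration ℕ mΩ)
    {Y : ℕ → Ω → ℝ} {φ ν : ℝ} (hφ : 0 ≤ φ) (hν : 0 ≤ ν) (k : ℕ)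
    (hY : ∀ j < k, Measurable[𝒢 (j + 1)] (Y j)) (hYb : ∀ j < k, ∀ᵐ ω ∂μ, |Y j ω| ≤ 1)
    (hc : ∀ j < k, μ[Y j|𝒢 j] ≤ᵐ[μ] fun _ => φ) :
    ∫ ω, exp (ν * ∑ j ∈ range k, Y j ω) ∂μ ≤ exp (k * (ν * φ + ν ^ 2 / 2)) := by
  induction k with
  | zero => simp
  | succ k ih =>
    have hYm : ∀ j < k + 1, AEMeasurable (Y j) μ := fun j hj =>
      ((hY j hj).mono (𝒢.le _) le_rfl).aemeasurable
    have hpast : StronglyMeasurable[𝒢 k] fun ω => exp (ν * ∑ j ∈ range k, Y j ω) := by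
      refine ((Finset.measurable_sum _ fun j hj => ?_).const_mul ν).exp.stronglyMeasurable
      exact (hY j (by grind)).mono (𝒢.mono (mem_range.1 hj)) le_rfl
    calc ∫ ω, exp (ν * ∑ j ∈ range (k + 1), Y j ω) ∂μ
        = ∫ ω, exp (ν * ∑ j ∈ range k, Y j ω) * exp (ν * Y k ω) ∂μ := by
          simp only [sum_range_succ, mul_add, exp_add]
      _ ≤ exp (ν * φ + ν ^ 2 / 2) * ∫ ω, exp (ν * ∑ j ∈ range k, Y j ω) ∂μ :=
          integral_mul_exp_mul_le (𝒢.le k) (hYm k k.lt_succ_self) (hYb k k.lt_succ_self) hφ hν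
            (hc k k.lt_succ_self) hpast (fun _ => (exp_pos _).le)
            (integrable_exp_mul_sum (fun j hj => hYm j (by grind))
              (fun j hj => hYb j (by grind)) ν)
      _ ≤ exp (ν * φ + ν ^ 2 / 2) * exp (k * (ν * φ + ν ^ 2 / 2)) := by
          gcongr
          exact ih (fun j hj => hY j (by omega)) (fun j hj => hYb j (by omega))
            (fun j hj => hc j (by omega))
      _ = exp ((k + 1 : ℕ) * (ν * φ + ν ^ 2 / 2)) := by
          rw [← exp_add]
          push_cast
          ring_nf

lemma integral_exp_average_le {ι : Type*} {s : Finset ι} (hs : s.Nonempty) {Z : ι → Ω → ℝ}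
    (hZ : ∀ r ∈ s, AEMeasurable (Z r) μ) (hZi : ∀ r ∈ s, Integrable (fun ω => exp (Z r ω)) μ)
    {B : ℝ} (hB : ∀ r ∈ s, ∫ ω, exp (Z r ω) ∂μ ≤ B) :
    ∫ ω, exp ((#s : ℝ)⁻¹ * ∑ r ∈ s, Z r ω) ∂μ ≤ B := by
  have hcard : (#s : ℝ) ≠ 0 := by exact_mod_cast hs.card_pos.ne'
  have hjensen : ∀ ω, exp ((#s : ℝ)⁻¹ * ∑ r ∈ s, Z r ω) ≤ (#s : ℝ)⁻¹ * ∑ r ∈ s, exp (Z r ω) := by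
    intro ω
    simpa [Finset.mul_sum] using convexOn_exp.map_sum_le (t := s) (w := fun _ => (#s : ℝ)⁻¹)
      (p := fun r => Z r ω) (fun _ _ => by positivity) (by simp [hcard]) (fun _ _ => trivial)
  have hsum : Integrable (fun ω => (#s : ℝ)⁻¹ * ∑ r ∈ s, exp (Z r ω)) μ :=
    (integrable_finsetSum s hZi).const_mul _
  have hlhs : Integrable (fun ω => exp ((#s : ℝ)⁻¹ * ∑ r ∈ s, Z r ω)) μ := by
    refine hsum.mono' (((Finset.aemeasurable_fun_sum s hZ).const_mul _).exp.aestronglyMeasurable)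
      (Filter.Eventually.of_forall fun ω => ?_)
    rw [norm_of_nonneg (exp_pos _).le]
    exact hjensen ω
  calc ∫ ω, exp ((#s : ℝ)⁻¹ * ∑ r ∈ s, Z r ω) ∂μ
      ≤ ∫ ω, (#s : ℝ)⁻¹ * ∑ r ∈ s, exp (Z r ω) ∂μ := integral_mono hlhs hsum hjensen
    _ = (#s : ℝ)⁻¹ * ∑ r ∈ s, ∫ ω, exp (Z r ω) ∂μ := by
        rw [integral_const_mul, integral_finsetSum s hZi]
    _ ≤ (#s : ℝ)⁻¹ * ∑ _r ∈ s, B := by gcongr with r hr; exact hB r hr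
    _ = B := by rw [sum_const, nsmul_eq_mul, inv_mul_cancel_left₀ hcard]

def MeasureTheory.Filtration.reindex {ι κ : Type*} [Preorder ι] [Preorder κ]
    (ℱ : Filtration κ mΩ) (τ : ι → κ) (hτ : Monotone τ) : Filtration ι mΩ where
  seq i := ℱ (τ i)
  mono' _ _ hij := ℱ.mono (hτ hij)
  le' i := ℱ.le (τ i)

lemma integral_exp_mul_sum_arith_le [IsProbabilityMeasure μ] (ℱ : Filtration ℕ mΩ) {d K r : ℕ}
    {X : ℕ → Ω → ℝ} {φ ν : ℝ} (hφ : 0 ≤ φ) (hν : 0 ≤ ν)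
    (hXmeas : ∀ j < K, Measurable[ℱ (j * d + r)] (X (j * d + r)))
    (hXbdd : ∀ j < K, ∀ᵐ ω ∂μ, |X (j * d + r) ω| ≤ 1)
    (hcond : ∀ j < K, μ[X (j * d + r) | ℱ (j * d + r - d)] ≤ᵐ[μ] fun _ => φ) :
    ∫ ω, exp (ν * ∑ j ∈ range K, X (j * d + r) ω) ∂μ ≤ exp (K * (ν * φ + ν ^ 2 / 2)) := by
  have hτ : Monotone fun j => j * d + r - d := fun i j hij => by dsimp only; gcongr
  refine integral_exp_mul_sum_range_le (ℱ.reindex _ hτ) hφ hν K (fun j hj => ?_) hXbdd hcond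
  have hnext : (j + 1) * d + r - d = j * d + r := by rw [Nat.succ_mul]; omega
  change Measurable[ℱ ((j + 1) * d + r - d)] _
  rw [hnext]
  exact hXmeas j hj

theorem integral_exp_mul_sum_Icc_le [IsProbabilityMeasure μ] (ℱ : Filtration ℕ mΩ) {d K n : ℕ}
    (hd : 1 ≤ d) (hn : n = K * d) {X : ℕ → Ω → ℝ} {φ : ℝ} (hφ : 0 ≤ φ)
    (hXmeas : ∀ t, 1 ≤ t → t ≤ n → Measurable[ℱ t] (X t))
    (hXbdd : ∀ t, 1 ≤ t → t ≤ n → ∀ᵐ ω ∂μ, |X t ω| ≤ 1)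
    (hcond : ∀ t, 1 ≤ t → t ≤ n → μ[X t | ℱ (t - d)] ≤ᵐ[μ] fun _ => φ) {θ : ℝ} (hθ : 0 ≤ θ) :
    ∫ ω, exp (θ * ∑ t ∈ Icc 1 n, X t ω) ∂μ ≤ exp (θ * (n * φ) + n * d * θ ^ 2 / 2) := by
  subst hn
  have hidx : ∀ r ∈ Icc 1 d, ∀ j < K, 1 ≤ j * d + r ∧ j * d + r ≤ K * d := by
    intro r hr j hj
    obtain ⟨hr1, hrd⟩ := mem_Icc.1 hr
    exact ⟨by omega, by nlinarith⟩
  have hblock : ∀ r ∈ Icc 1 d, ∫ ω, exp (d * θ * ∑ j ∈ range K, X (j * d + r) ω) ∂μ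
      ≤ exp (K * (d * θ * φ + (d * θ) ^ 2 / 2)) := fun r hr =>
    integral_exp_mul_sum_arith_le ℱ hφ (by positivity)
      (fun j hj => hXmeas _ (hidx r hr j hj).1 (hidx r hr j hj).2)
      (fun j hj => hXbdd _ (hidx r hr j hj).1 (hidx r hr j hj).2)
      (fun j hj => hcond _ (hidx r hr j hj).1 (hidx r hr j hj).2)
  have hsplit : ∀ ω, θ * ∑ t ∈ Icc 1 (K * d), X t ω
      = (#(Icc 1 d) : ℝ)⁻¹ * ∑ r ∈ Icc 1 d, d * θ * ∑ j ∈ range K, X (j * d + r) ω := by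
    intro ω
    have hd0 : (d : ℝ) ≠ 0 := by positivity
    rw [sum_Icc_mul_eq_sum_Icc_sum_range, ← mul_sum, Nat.card_Icc, Nat.add_sub_cancel]
    field_simp
  have hXm : ∀ r ∈ Icc 1 d, ∀ j ∈ range K, AEMeasurable (X (j * d + r)) μ := fun r hr j hj =>
    have hj := hidx r hr j (mem_range.1 hj)
    ((hXmeas _ hj.1 hj.2).mono (ℱ.le _) le_rfl).aemeasurable
  have hXb : ∀ r ∈ Icc 1 d, ∀ j ∈ range K, ∀ᵐ ω ∂μ, |X (j * d + r) ω| ≤ 1 := fun r hr j hj =>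
    have hj := hidx r hr j (mem_range.1 hj)
    hXbdd _ hj.1 hj.2
  simp_rw [hsplit]
  refine (integral_exp_average_le (nonempty_Icc.2 hd)
    (fun r hr => (aemeasurable_fun_sum _ (hXm r hr)).const_mul _)
    (fun r hr => integrable_exp_mul_sum (hXm r hr) (hXb r hr) _) hblock).trans_eq ?_
  congr 1
  push_cast
  ring

lemma measureReal_add_le_le_exp_of_integral_exp_le [IsFiniteMeasure μ] {S : Ω → ℝ} {a c u : ℝ}
    (hc : 0 < c) (hu : 0 ≤ u) (hint : ∀ t, 0 ≤ t → Integrable (fun ω => exp (t * S ω)) μ)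
    (hmgf : ∀ t, 0 ≤ t → ∫ ω, exp (t * S ω) ∂μ ≤ exp (t * a + c * t ^ 2 / 2)) :
    μ.real {ω | a + u ≤ S ω} ≤ exp (-u ^ 2 / (2 * c)) := by
  have ht : 0 ≤ u / c := by positivity
  calc μ.real {ω | a + u ≤ S ω} ≤ exp (-(u / c) * (a + u)) * mgf S μ (u / c) :=
        measure_ge_le_exp_mul_mgf (a + u) ht (hint _ ht)
    _ ≤ exp (-(u / c) * (a + u)) * exp (u / c * a + c * (u / c) ^ 2 / 2) := by
        gcongr
        exact hmgf _ ht
    _ = exp (-u ^ 2 / (2 * c)) := by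
        rw [← exp_add]
        congr 1
        field_simp
        ring

lemma one_sub_ofReal_le_measure [IsProbabilityMeasure μ] {s t : Set Ω} {δ : ℝ} (hst : sᶜ ⊆ t)
    (ht : μ.real t ≤ δ) : 1 - ENNReal.ofReal δ ≤ μ s := by
  rw [tsub_le_iff_right]
  calc 1 = μ (s ∪ sᶜ) := by simp
    _ ≤ μ s + μ sᶜ := measure_union_le _ _
    _ ≤ μ s + ENNReal.ofReal (μ.real t) := by rw [ofReal_measureReal]; gcongr
    _ ≤ μ s + ENNReal.ofReal δ := by gcongr

end

theorem blocking_concentration_general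
    {Ω : Type*} [mΩ : MeasurableSpace Ω] (ℙ : Measure Ω) [IsProbabilityMeasure ℙ]
    (ℱ : Filtration ℕ mΩ)
    (d K n : ℕ) (hd : 1 ≤ d) (hK : 1 ≤ K) (hn : n = K * d)
    (X : ℕ → Ω → ℝ)
    (hXmeas : ∀ t, 1 ≤ t → t ≤ n → Measurable[ℱ t] (X t))
    (hXbdd : ∀ t, 1 ≤ t → t ≤ n → ∀ᵐ ω ∂ℙ, |X t ω| ≤ 1)
    (φ : ℝ) (hφ : 0 ≤ φ)
    (hcond : ∀ t, 1 ≤ t → t ≤ n → ℙ[X t | ℱ (t - d)] ≤ᵐ[ℙ] fun _ => φ)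
    (δ : ℝ) (hδ0 : 0 < δ) (hδ1 : δ < 1) :
    1 - ENNReal.ofReal δ ≤
      ℙ {ω | (1 / (n : ℝ)) * ∑ t ∈ Finset.Icc 1 n, X t ω
              ≤ φ + Real.sqrt (2 * d * Real.log (1 / δ) / n)} := by
  have hn0 : (0 : ℝ) < n := by rw [hn]; exact_mod_cast Nat.mul_pos hK hd
  have hL : 0 < log (1 / δ) := log_pos (one_lt_one_div hδ0 hδ1)
  set ε := √(2 * d * log (1 / δ) / n)
  have hεsq : ε ^ 2 = 2 * d * log (1 / δ) / n := sq_sqrt (by positivity)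
  have hXm : ∀ t ∈ Icc 1 n, AEMeasurable (X t) ℙ := fun t ht =>
    ((hXmeas t (mem_Icc.1 ht).1 (mem_Icc.1 ht).2).mono (ℱ.le t) le_rfl).aemeasurable
  have htail := measureReal_add_le_le_exp_of_integral_exp_le (μ := ℙ)
    (S := fun ω => ∑ t ∈ Icc 1 n, X t ω) (a := n * φ) (u := n * ε) (by positivity) (by positivity)
    (fun θ _ => integrable_exp_mul_sum hXm
      (fun t ht => hXbdd t (mem_Icc.1 ht).1 (mem_Icc.1 ht).2) θ)
    (fun θ hθ => integral_exp_mul_sum_Icc_le ℱ hd hn hφ hXmeas hXbdd hcond hθ)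
  refine one_sub_ofReal_le_measure (fun ω hω => ?_) (htail.trans_eq ?_)
  · simp only [Set.mem_compl_iff, Set.mem_ofPred_eq, not_le] at hω ⊢
    rw [one_div, lt_inv_mul_iff₀ hn0] at hω
    linarith
  · have hexponent : -((n : ℝ) * ε) ^ 2 / (2 * (n * d)) = log δ := by
      rw [mul_pow, hεsq, one_div, log_inv]
      field_simp
    rw [hexponent, exp_log hδ0]

/-- **Blocking concentration inequality.** Let `(ℱ t)` be a filtration (trivial at time `0`),
`d, K ≥ 1`, `n = K·d`, and `X 1, …, X n` real random variables with `X t` `ℱ t`-measurable,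
`|X t| ≤ 1` a.s., and `E[X t | ℱ (t−d)] ≤ φ` a.s. for some `φ ≥ 0`. Then for every
`δ ∈ (0,1)`, with probability at least `1 − δ`,
`(1/n) ∑ₜ X t ≤ φ + √(2 d log(1/δ)/n)`. -/
theorem blocking_concentration
    {Ω : Type*} [mΩ : MeasurableSpace Ω] (ℙ : Measure Ω) [IsProbabilityMeasure ℙ]
    (ℱ : Filtration ℕ mΩ) (hℱtriv : ℱ 0 = ⊥)
    (d K n : ℕ) (hd : 1 ≤ d) (hK : 1 ≤ K) (hn : n = K * d)
    (X : ℕ → Ω → ℝ)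
    (hXmeas : ∀ t, 1 ≤ t → t ≤ n → Measurable[ℱ t] (X t))
    (hXbdd : ∀ t, 1 ≤ t → t ≤ n → ∀ᵐ ω ∂ℙ, |X t ω| ≤ 1)
    (φ : ℝ) (hφ : 0 ≤ φ)
    (hcond : ∀ t, 1 ≤ t → t ≤ n → ℙ[X t | ℱ (t - d)] ≤ᵐ[ℙ] fun _ => φ)
    (δ : ℝ) (hδ0 : 0 < δ) (hδ1 : δ < 1) :
    1 - ENNReal.ofReal δ ≤
      ℙ {ω | (1 / (n : ℝ)) * ∑ t ∈ Finset.Icc 1 n, X t ω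
              ≤ φ + Real.sqrt (2 * d * Real.log (1 / δ) / n)} :=
  blocking_concentration_general (mΩ := mΩ) ℙ ℱ d K n hd hK hn X hXmeas hXbdd φ hφ hcond δ hδ0 hδ1
end

section
/- Jensen step of the delayed-regret reduction: let R : (0,∞) → ℝ be a nondecreasing function such that for every fixed x > 0 the map y ↦ y·R(x/y) is concave on (0,∞). Then for any d ≥ 1 and any positive reals n_1, …, n_d with Σ_{i=1}^d n_i = n, one has Σ_{i=1}^d R(n_i) ≤ d·R(n/d). -/
set_option autoImplicit false

open Finset

/- Jensen's inequality for the concave map `y ↦ y * R (n / y)`, with weights `mᵢ / n` at the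
points `n / mᵢ`: each weighted value is `R mᵢ`, and the weighted mean point is `#s`. -/
theorem sum_le_card_mul_of_concaveOn_perspective {ι : Type*} (R : ℝ → ℝ)
    (hconc : ∀ x : ℝ, 0 < x → ConcaveOn ℝ (Set.Ioi 0) (fun y => y * R (x / y)))
    (s : Finset ι) (m : ι → ℝ) (hm : ∀ i ∈ s, 0 < m i) :
    ∑ i ∈ s, R (m i) ≤ #s * R ((∑ i ∈ s, m i) / #s) := by
  obtain rfl | hs := s.eq_empty_or_nonempty
  · simp
  set n := ∑ i ∈ s, m i
  have hn : 0 < n := sum_pos hm hs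
  have hweight : ∀ i ∈ s, m i / n * (n / m i) = 1 := fun i hi => by
    have := (hm i hi).ne'
    field_simp
  have hjensen := (hconc n hn).le_map_sum (t := s) (w := fun i => m i / n)
    (p := fun i => n / m i) (fun i hi => (div_pos (hm i hi) hn).le)
    (by rw [← sum_div, div_self hn.ne'])
    (fun i hi => Set.mem_Ioi.2 (div_pos hn (hm i hi)))
  have hvalues : ∑ i ∈ s, (m i / n) • ((n / m i) * R (n / (n / m i))) = ∑ i ∈ s, R (m i) :=
    sum_congr rfl fun i hi => by
      rw [smul_eq_mul, ← mul_assoc, hweight i hi, div_div_cancel₀ hn.ne', one_mul]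
  have hmean : ∑ i ∈ s, (m i / n) • (n / m i) = #s := by
    rw [sum_congr rfl fun i hi => (smul_eq_mul _ _).trans (hweight i hi)]
    simp
  simpa only [hvalues, hmean] using hjensen

theorem jensen_step_delayed_regret_general
    (R : ℝ → ℝ)
    (hconc : ∀ x : ℝ, 0 < x → ConcaveOn ℝ (Set.Ioi (0 : ℝ)) (fun y => y * R (x / y)))
    (d : ℕ)
    (m : Fin d → ℝ) (hm : ∀ i, 0 < m i)
    (n : ℝ) (hsum : ∑ i, m i = n) :
    ∑ i, R (m i) ≤ d * R (n / d) := by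
  simpa [hsum] using sum_le_card_mul_of_concaveOn_perspective R hconc univ m fun i _ => hm i

/-- **Jensen step of the delayed-regret reduction (Weinberger–Ordentlich).**
Let `R : (0,∞) → ℝ` be nondecreasing and such that for every fixed `x > 0` the map
`y ↦ y·R(x/y)` is concave on `(0,∞)`. Then for any `d ≥ 1` and positive reals
`n₁, …, n_d` summing to `n`, one has `∑ᵢ R(nᵢ) ≤ d·R(n/d)`. -/
theorem jensen_step_delayed_regret
    (R : ℝ → ℝ) (hmono : MonotoneOn R (Set.Ioi (0 : ℝ)))
    (hconc : ∀ x : ℝ, 0 < x → ConcaveOn ℝ (Set.Ioi (0 : ℝ)) (fun y => y * R (x / y)))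
    (d : ℕ) (hd : 1 ≤ d)
    (m : Fin d → ℝ) (hm : ∀ i, 0 < m i)
    (n : ℝ) (hsum : ∑ i, m i = n) :
    ∑ i, R (m i) ≤ d * R (n / d) :=
  jensen_step_delayed_regret_general R hconc d m hm n hsum
end

section
/- Regret bound for the exponentially weighted average algorithm: let 𝒲 be a measurable space, P_1 a probability measure on 𝒲, η > 0, and c_1,…,c_n : 𝒲 → ℝ bounded measurable functions. Define P_2,…,P_{n+1} recursively by dP_{t+1}/dP_t = e^{−η c_t(·)} / ∫ e^{−η c_t(w')} dP_t(w'). Then for every probability measure P* on 𝒲 absolutely continuous with respect to P_1 with finite Kullback–Leibler divergence KL(P*‖P_1), Σ_{t=1}^n (⟨P_t, c_t⟩ − ⟨P*, c_t⟩) ≤ KL(P*‖P_1)/η + (η/2)·Σ_{t=1}^n ‖c_t‖_∞², where ‖c‖_∞ = sup_{w} |c(w)|. -/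
set_option autoImplicit false

open MeasureTheory

/-!
The EWA measures are iterated exponential tiltings, `P (t + 1) = P₁.tilted (-η ∑_{s ≤ t} c s)`,
so their normalising constants `Z s = ∫ exp (-η c s) dP s` telescope:
`log ∫ exp (-η ∑_{s ≤ n} c s) dP₁ = ∑_{s ≤ n} log Z s`. The Donsker–Varadhan inequality
`∫ F dP* - log ∫ exp F dP₁ ≤ KL(P*‖P₁)`, which is Gibbs' inequality for `P*` against `P₁.tilted F`,
applied to `F = -η ∑ c s` bounds `-η ∑ ⟨P*, c s⟩ - ∑ log Z s` by the divergence, and Hoeffding's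
lemma bounds each `log Z s` by `-η ⟨P s, c s⟩ + η² ‖c s‖²_∞ / 2`.
-/

open ProbabilityTheory Real Finset

section

variable {α : Type*} [MeasurableSpace α]

lemma log_integral_exp_mul_le {μ : Measure α} [IsProbabilityMeasure μ] {X : α → ℝ}
    (hX : AEMeasurable X μ) {B : ℝ} (hB : ∀ᵐ x ∂μ, |X x| ≤ B) (t : ℝ) :
    log (∫ x, exp (t * X x) ∂μ) ≤ t * ∫ x, X x ∂μ + t ^ 2 * B ^ 2 / 2 := by
  have hsubgauss := hasSubgaussianMGF_of_mem_Icc hX (a := -B) (b := B)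
    (by filter_upwards [hB] with x hx using abs_le.1 hx)
  have hmgf : ∫ x, exp (t * X x) ∂μ = mgf (fun x ↦ X x - μ[X]) μ t * exp (t * μ[X]) := by
    rw [← mgf_add_const]
    simp [mgf]
  have hparam : (((‖B - -B‖₊ / 2) ^ 2 : NNReal) : ℝ) = B ^ 2 := by
    simp only [NNReal.coe_pow, NNReal.coe_div, coe_nnnorm, norm_eq_abs, NNReal.coe_ofNat, div_pow,
      sub_neg_eq_add, ← two_mul, abs_mul, mul_pow, sq_abs]
    norm_num
  rw [hmgf, log_mul (mgf_pos (hsubgauss.integrable_exp_mul t)).ne' (exp_pos _).ne', log_exp]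
  have := hsubgauss.cgf_le t
  rw [cgf, hparam] at this
  linarith

lemma integral_sub_log_integral_exp_le_integral_llr {μ ν : Measure α} [IsProbabilityMeasure μ]
    [IsProbabilityMeasure ν] (hμν : μ ≪ ν) (h_int : Integrable (llr μ ν) μ) {f : α → ℝ}
    (hfμ : Integrable f μ) (hfν : Integrable (fun x ↦ exp (f x)) ν) :
    ∫ x, f x ∂μ - log (∫ x, exp (f x) ∂ν) ≤ ∫ x, llr μ ν x ∂μ := by
  have := isProbabilityMeasure_tilted hfν
  have hgibbs := InformationTheory.integral_llr_add_sub_measure_univ_nonneg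
    (hμν.trans (absolutelyContinuous_tilted hfν)) (integrable_llr_tilted_right hμν hfμ h_int hfν)
  rw [integral_llr_tilted_right hμν hfμ hfν h_int] at hgibbs
  simp only [probReal_univ] at hgibbs
  linarith

lemma log_integral_exp_add {μ : Measure α} [NeZero μ] {F g : α → ℝ}
    (hF : Integrable (fun x ↦ exp (F x)) μ) (hFg : Integrable (fun x ↦ exp ((F + g) x)) μ) :
    log (∫ x, exp ((F + g) x) ∂μ)
      = log (∫ x, exp (F x) ∂μ) + log (∫ x, exp (g x) ∂(μ.tilted F)) := by
  rw [integral_exp_tilted, log_div (integral_exp_pos hFg).ne' (integral_exp_pos hF).ne']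
  ring

lemma integrable_exp_sum {μ : Measure α} [IsFiniteMeasure μ] {ι : Type*} (s : Finset ι)
    {f : ι → α → ℝ} (hf : ∀ i, Measurable (f i)) (hbdd : ∀ i, ∃ B, ∀ x, |f i x| ≤ B) :
    Integrable (fun x ↦ exp ((∑ i ∈ s, f i) x)) μ := by
  choose B hB using hbdd
  simp only [Finset.sum_apply]
  refine .of_bound (Finset.measurable_sum s fun i _ ↦ hf i).exp.aestronglyMeasurable
    (exp (∑ i ∈ s, B i)) (ae_of_all _ fun x ↦ ?_)
  rw [norm_of_nonneg (exp_pos _).le, exp_le_exp]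
  exact sum_le_sum fun i _ ↦ (le_abs_self _).trans (hB i x)

end

section TiltedSequence

variable {α : Type*} [MeasurableSpace α]
variable {f : ℕ → α → ℝ} {P : ℕ → Measure α} {n : ℕ} [IsProbabilityMeasure (P 1)]

lemma eq_tilted_sum_of_tilted_succ (hf : ∀ t, Measurable (f t))
    (hbdd : ∀ t, ∃ B, ∀ x, |f t x| ≤ B) (hP : ∀ t ∈ Icc 1 n, P (t + 1) = (P t).tilted (f t)) :
    ∀ t ≤ n, P (t + 1) = (P 1).tilted (∑ s ∈ Icc 1 t, f s)
  | 0, _ => by simp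
  | t + 1, ht => by
    rw [hP (t + 1) (mem_Icc.2 ⟨by omega, ht⟩),
      eq_tilted_sum_of_tilted_succ hf hbdd hP t (by omega),
      tilted_tilted (integrable_exp_sum _ hf hbdd), sum_Icc_succ_top (by omega)]

lemma isProbabilityMeasure_of_tilted_succ (hf : ∀ t, Measurable (f t))
    (hbdd : ∀ t, ∃ B, ∀ x, |f t x| ≤ B) (hP : ∀ t ∈ Icc 1 n, P (t + 1) = (P t).tilted (f t))
    {t : ℕ} (ht : t ∈ Icc 1 (n + 1)) : IsProbabilityMeasure (P t) := by
  obtain ⟨s, rfl⟩ : ∃ s, t = s + 1 := Nat.exists_eq_add_one.2 (mem_Icc.1 ht).1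
  rw [eq_tilted_sum_of_tilted_succ hf hbdd hP s (by simp at ht; omega)]
  exact isProbabilityMeasure_tilted (integrable_exp_sum _ hf hbdd)

lemma log_integral_exp_sum_of_tilted_succ (hf : ∀ t, Measurable (f t))
    (hbdd : ∀ t, ∃ B, ∀ x, |f t x| ≤ B) (hP : ∀ t ∈ Icc 1 n, P (t + 1) = (P t).tilted (f t)) :
    ∀ t ≤ n, log (∫ x, exp ((∑ s ∈ Icc 1 t, f s) x) ∂(P 1))
      = ∑ s ∈ Icc 1 t, log (∫ x, exp (f s x) ∂(P s))
  | 0, _ => by simp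
  | t + 1, ht => by
    have hint := integrable_exp_sum (μ := P 1) (Icc 1 (t + 1)) hf hbdd
    rw [sum_Icc_succ_top (by omega)] at hint
    rw [sum_Icc_succ_top (by omega), sum_Icc_succ_top (by omega),
      log_integral_exp_add (integrable_exp_sum _ hf hbdd) hint,
      ← eq_tilted_sum_of_tilted_succ hf hbdd hP t (by omega),
      log_integral_exp_sum_of_tilted_succ hf hbdd hP t (by omega)]

lemma sum_integral_sub_log_integral_exp_le_integral_llr (hf : ∀ t, Measurable (f t))
    (hbdd : ∀ t, ∃ B, ∀ x, |f t x| ≤ B) (hP : ∀ t ∈ Icc 1 n, P (t + 1) = (P t).tilted (f t))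
    {Q : Measure α} [IsProbabilityMeasure Q] (hQ : Q ≪ P 1) (h_int : Integrable (llr Q (P 1)) Q) :
    ∑ t ∈ Icc 1 n, (∫ x, f t x ∂Q - log (∫ x, exp (f t x) ∂(P t)))
      ≤ ∫ x, llr Q (P 1) x ∂Q := by
  have hint : ∀ t, Integrable (f t) Q := fun t ↦ by
    obtain ⟨B, hB⟩ := hbdd t
    exact .of_bound (hf t).aestronglyMeasurable B (ae_of_all _ hB)
  have h := integral_sub_log_integral_exp_le_integral_llr hQ h_int
    (integrable_finsetSum' (Icc 1 n) fun t _ ↦ hint t) (integrable_exp_sum _ hf hbdd)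
  rw [log_integral_exp_sum_of_tilted_succ hf hbdd hP n le_rfl] at h
  simp only [Finset.sum_apply, integral_finsetSum _ fun t _ ↦ hint t] at h
  rwa [sum_sub_distrib]

end TiltedSequence

theorem regret_bound_EWA_general
    {𝒲 : Type*} [MeasurableSpace 𝒲]
    (P₁ : Measure 𝒲) [IsProbabilityMeasure P₁]
    (η : ℝ) (hη : 0 < η)
    (n : ℕ)
    (c : ℕ → 𝒲 → ℝ) (hcmeas : ∀ t, Measurable (c t))
    (hcbdd : ∀ t, ∃ B : ℝ, ∀ w, |c t w| ≤ B)
    (P : ℕ → Measure 𝒲) (hP1 : P 1 = P₁)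
    (hPrec : ∀ t ∈ Finset.Icc 1 n, P (t + 1) =
      (P t).withDensity (fun w => ENNReal.ofReal
        (Real.exp (-η * c t w) / ∫ w', Real.exp (-η * c t w') ∂(P t))))
    (Pstar : Measure 𝒲) [IsProbabilityMeasure Pstar]
    (hac : Pstar ≪ P₁)
    (hKLfin : Integrable (fun w => Real.log ((Pstar.rnDeriv P₁ w).toReal)) Pstar) :
    ∑ t ∈ Finset.Icc 1 n, ((∫ w, c t w ∂(P t)) - ∫ w, c t w ∂Pstar)
      ≤ (∫ w, Real.log ((Pstar.rnDeriv P₁ w).toReal) ∂Pstar) / η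
        + η / 2 * ∑ t ∈ Finset.Icc 1 n, (⨆ w, |c t w|) ^ 2 := by
  subst hP1
  have hf : ∀ t, Measurable fun w ↦ -η * c t w := fun t ↦ (hcmeas t).const_mul _
  have hfbdd : ∀ t, ∃ B, ∀ w, |-η * c t w| ≤ B := fun t ↦ by
    obtain ⟨B, hB⟩ := hcbdd t
    exact ⟨η * B, fun w ↦ by rw [abs_mul, abs_neg, abs_of_pos hη]; gcongr; exact hB w⟩
  have hP : ∀ t ∈ Icc 1 n, P (t + 1) = (P t).tilted fun w ↦ -η * c t w := hPrec
  have hgibbs := sum_integral_sub_log_integral_exp_le_integral_llr (P := P) hf hfbdd hP hac hKLfin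
  rw [llr_def] at hgibbs
  have hstep : ∀ t ∈ Icc 1 n, η * (∫ w, c t w ∂(P t) - ∫ w, c t w ∂Pstar)
      ≤ (∫ w, -η * c t w ∂Pstar - log (∫ w, exp (-η * c t w) ∂(P t)))
        + η ^ 2 / 2 * (⨆ w, |c t w|) ^ 2 := fun t ht ↦ by
    have := isProbabilityMeasure_of_tilted_succ hf hfbdd hP (Icc_subset_Icc_right n.le_succ ht)
    obtain ⟨B, hB⟩ := hcbdd t
    have hsup : ∀ w, |c t w| ≤ ⨆ w, |c t w| := le_ciSup ⟨B, by rintro _ ⟨w, rfl⟩; exact hB w⟩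
    have hhoeff := log_integral_exp_mul_le (μ := P t) (hcmeas t).aemeasurable
      (ae_of_all _ hsup) (-η)
    rw [neg_sq] at hhoeff
    rw [integral_const_mul]
    linarith
  have hregret : η * ∑ t ∈ Icc 1 n, (∫ w, c t w ∂(P t) - ∫ w, c t w ∂Pstar)
      ≤ ∫ w, log ((Pstar.rnDeriv (P 1) w).toReal) ∂Pstar
        + η ^ 2 / 2 * ∑ t ∈ Icc 1 n, (⨆ w, |c t w|) ^ 2 := by
    rw [mul_sum, mul_sum]
    grw [sum_le_sum hstep, sum_add_distrib, hgibbs]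
  rw [div_add' _ _ _ hη.ne', le_div_iff₀ hη]
  linarith

/-- **Regret bound for the exponentially weighted average algorithm.** Let `𝒲` be a
measurable space, `P₁` a probability measure on `𝒲`, `η > 0`, and `c 1, …, c n` bounded
measurable real functions on `𝒲`. Define `P 2, …, P (n+1)` recursively by
`dP (t+1)/dP t = exp(−η c t)/∫ exp(−η c t) dP t`. Then for every probability measure `P*`
absolutely continuous w.r.t. `P₁` with finite KL divergence,
`∑ₜ (⟨P t, c t⟩ − ⟨P*, c t⟩) ≤ KL(P*‖P₁)/η + (η/2) ∑ₜ ‖c t‖_∞²`. -/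
theorem regret_bound_EWA
    {𝒲 : Type*} [MeasurableSpace 𝒲] [Nonempty 𝒲]
    (P₁ : Measure 𝒲) [IsProbabilityMeasure P₁]
    (η : ℝ) (hη : 0 < η)
    (n : ℕ)
    (c : ℕ → 𝒲 → ℝ) (hcmeas : ∀ t, Measurable (c t))
    (hcbdd : ∀ t, ∃ B : ℝ, ∀ w, |c t w| ≤ B)
    (P : ℕ → Measure 𝒲) (hP1 : P 1 = P₁)
    (hPrec : ∀ t ∈ Finset.Icc 1 n, P (t + 1) =
      (P t).withDensity (fun w => ENNReal.ofReal
        (Real.exp (-η * c t w) / ∫ w', Real.exp (-η * c t w') ∂(P t))))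
    (Pstar : Measure 𝒲) [IsProbabilityMeasure Pstar]
    (hac : Pstar ≪ P₁)
    (hKLfin : Integrable (fun w => Real.log ((Pstar.rnDeriv P₁ w).toReal)) Pstar) :
    ∑ t ∈ Finset.Icc 1 n, ((∫ w, c t w ∂(P t)) - ∫ w, c t w ∂Pstar)
      ≤ (∫ w, Real.log ((Pstar.rnDeriv P₁ w).toReal) ∂Pstar) / η
        + η / 2 * ∑ t ∈ Finset.Icc 1 n, (⨆ w, |c t w|) ^ 2 :=
  regret_bound_EWA_general P₁ η hη n c hcmeas hcbdd P hP1 hPrec Pstar hac hKLfin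
end

section
/- Regret bound for follow-the-regularized-leader: let V be a real normed vector space, D ⊆ V a nonempty convex set, α > 0, and h : D → ℝ an α-strongly convex function on D with respect to the norm, i.e. h(λP + (1−λ)P') ≤ λh(P) + (1−λ)h(P') − (αλ(1−λ)/2)·‖P − P'‖² for all P, P' ∈ D and λ ∈ [0,1]. Let c_1,…,c_n ∈ V* be continuous linear functionals, let η > 0, and suppose P_1 ∈ D minimizes h over D and, for each t ∈ {1,…,n}, P_{t+1} ∈ D minimizes P ↦ Σ_{s=1}^t c_s(P) + h(P)/η over D. Then for every P* ∈ D: Σ_{t=1}^n (c_t(P_t) − c_t(P*)) ≤ (h(P*) − h(P_1))/η + (η/(2α))·Σ_{t=1}^n ‖c_t‖_*², where ‖·‖_* is the dual (operator) norm on V*. -/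
/-!
Write `F t = ∑_{s ≤ t} c s + h / η`, so that `P (t + 1)` minimizes `F t` over `D` and every `F t`
is `(α / η)`-strongly convex on `D`. Since `F t = F (t - 1) + c t`, the sum `∑ₜ c t (P t)`
telescopes into `F n (P (n + 1)) - F 0 (P 1)` plus the stability terms
`F t (P t) - F t (P (t + 1))`, and `F n (P (n + 1)) ≤ F n P*`. A stability term is small because
`P t` minimizes the strongly convex `F (t - 1)`: its growth `(α / 2η) ‖P (t + 1) - P t‖²` beats
the gain `c t (P t) - c t (P (t + 1)) ≤ ‖c t‖ ‖P (t + 1) - P t‖` up to `η ‖c t‖² / (2α)`.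
-/

open Filter Topology Finset

section StrongConvexity

variable {E : Type*} [NormedAddCommGroup E] [NormedSpace ℝ E] {s : Set E} {m : ℝ} {f g : E → ℝ}

lemma strongConvexOn_of_forall_mem_Icc (hs : Convex ℝ s)
    (hf : ∀ x ∈ s, ∀ y ∈ s, ∀ l ∈ Set.Icc (0 : ℝ) 1,
      f (l • x + (1 - l) • y) ≤ l * f x + (1 - l) * f y - m * l * (1 - l) / 2 * ‖x - y‖ ^ 2) :
    StrongConvexOn s m f := by
  refine ⟨hs, fun x hx y hy a b ha hb hab ↦ ?_⟩
  obtain rfl : b = 1 - a := by linarith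
  have := hf x hx y hy a ⟨ha, by linarith⟩
  simp only [smul_eq_mul]
  linarith

lemma StrongConvexOn.const_smul (hf : StrongConvexOn s m f) {c : ℝ} (hc : 0 ≤ c) :
    StrongConvexOn s (c * m) (c • f) := by
  refine ⟨hf.1, fun x hx y hy a b ha hb hab ↦ ?_⟩
  have := mul_le_mul_of_nonneg_left (hf.2 hx hy ha hb hab) hc
  simp only [Pi.smul_apply, smul_eq_mul] at this ⊢
  linear_combination this

lemma StrongConvexOn.add_convexOn (hf : StrongConvexOn s m f) (hg : ConvexOn ℝ s g) :
    StrongConvexOn s m (f + g) := by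
  have := hf.add hg.uniformConvexOn_zero
  rwa [add_zero] at this

lemma StrongConvexOn.add_sq_norm_le_of_isMinOn (hf : StrongConvexOn s m f) {x y : E}
    (hx : x ∈ s) (hmin : IsMinOn f s x) (hy : y ∈ s) :
    f x + m / 2 * ‖y - x‖ ^ 2 ≤ f y := by
  -- Compare `f x` with the values of `f` on the segment towards `y`, then shrink the segment.
  have hsegment : ∀ l ∈ Set.Ioc (0 : ℝ) 1, f x + m / 2 * (1 - l) * ‖y - x‖ ^ 2 ≤ f y := by
    rintro l ⟨hl₀, hl₁⟩
    have hconv := hf.2 hy hx hl₀.le (sub_nonneg.2 hl₁) (add_sub_cancel l 1)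
    have hle : f x ≤ f (l • y + (1 - l) • x) :=
      hmin (hf.1 hy hx hl₀.le (sub_nonneg.2 hl₁) (add_sub_cancel l 1))
    simp only [smul_eq_mul] at hconv
    refine le_of_mul_le_mul_left ?_ hl₀
    nlinarith
  have hlim : Tendsto (fun l : ℝ ↦ f x + m / 2 * (1 - l) * ‖y - x‖ ^ 2) (𝓝[>] 0)
      (𝓝 (f x + m / 2 * ‖y - x‖ ^ 2)) :=
    (Continuous.tendsto' (by fun_prop) 0 _ (by simp)).mono_left nhdsWithin_le_nhds
  refine le_of_tendsto hlim ?_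
  filter_upwards [Ioc_mem_nhdsGT (zero_lt_one' ℝ)] using hsegment

lemma StrongConvexOn.add_apply_le_of_isMinOn (hf : StrongConvexOn s m f) (hm : 0 < m)
    (ℓ : E →L[ℝ] ℝ) {x y : E} (hx : x ∈ s) (hmin : IsMinOn f s x) (hy : y ∈ s) :
    f x + ℓ x ≤ f y + ℓ y + ‖ℓ‖ ^ 2 / (2 * m) := by
  have hgrowth := hf.add_sq_norm_le_of_isMinOn hx hmin hy
  have hℓ : ℓ x - ℓ y ≤ ‖ℓ‖ * ‖y - x‖ := by
    rw [← map_sub, norm_sub_rev]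
    exact (Real.le_norm_self _).trans (ℓ.le_opNorm _)
  have hamgm : ‖ℓ‖ * ‖y - x‖ - m / 2 * ‖y - x‖ ^ 2 ≤ ‖ℓ‖ ^ 2 / (2 * m) := by
    rw [le_div_iff₀ (by positivity)]
    nlinarith [sq_nonneg (m * ‖y - x‖ - ‖ℓ‖)]
  linarith

end StrongConvexity

section FTRL

variable {V : Type*} [NormedAddCommGroup V] [NormedSpace ℝ V]
  (c : ℕ → V →L[ℝ] ℝ) (h : V → ℝ) (η : ℝ)

noncomputable def ftrlObjective (t : ℕ) (v : V) : ℝ :=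
  ∑ s ∈ Icc 1 t, c s v + h v / η

lemma ftrlObjective_zero (v : V) : ftrlObjective c h η 0 v = h v / η := by
  simp [ftrlObjective]

lemma ftrlObjective_succ (t : ℕ) (v : V) :
    ftrlObjective c h η (t + 1) v = ftrlObjective c h η t v + c (t + 1) v := by
  rw [ftrlObjective, ftrlObjective, sum_Icc_succ_top (by omega)]
  ring

variable {c h η}

lemma strongConvexOn_ftrlObjective {D : Set V} {α : ℝ} (hh : StrongConvexOn D α h)
    (hη : 0 ≤ η) (t : ℕ) : StrongConvexOn D (α / η) (ftrlObjective c h η t) := by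
  have := (hh.const_smul (inv_nonneg.2 hη)).add_convexOn
    ((∑ s ∈ Icc 1 t, c s).toLinearMap.convexOn hh.1)
  convert this using 1
  · ring
  · funext v
    simp [ftrlObjective, div_eq_inv_mul, add_comm]

lemma ftrlObjective_succ_le_of_isMinOn {D : Set V} {α : ℝ} (hh : StrongConvexOn D α h)
    (hα : 0 < α) (hη : 0 < η) {t : ℕ} {x y : V} (hx : x ∈ D)
    (hmin : IsMinOn (ftrlObjective c h η t) D x) (hy : y ∈ D) :
    ftrlObjective c h η (t + 1) x
      ≤ ftrlObjective c h η (t + 1) y + η / (2 * α) * ‖c (t + 1)‖ ^ 2 := by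
  have := (strongConvexOn_ftrlObjective hh hη.le t).add_apply_le_of_isMinOn (div_pos hα hη)
    (c (t + 1)) hx hmin hy
  have hcoef : ‖c (t + 1)‖ ^ 2 / (2 * (α / η)) = η / (2 * α) * ‖c (t + 1)‖ ^ 2 := by
    field_simp
  rwa [ftrlObjective_succ, ftrlObjective_succ, ← hcoef]

lemma sum_apply_le_ftrlObjective {P : ℕ → V} {δ : ℕ → ℝ} (n : ℕ)
    (hstep : ∀ t ∈ Icc 1 n,
      ftrlObjective c h η t (P t) ≤ ftrlObjective c h η t (P (t + 1)) + δ t) :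
    ∑ t ∈ Icc 1 n, c t (P t)
      ≤ ftrlObjective c h η n (P (n + 1)) - ftrlObjective c h η 0 (P 1) + ∑ t ∈ Icc 1 n, δ t := by
  induction n with
  | zero => simp
  | succ n ih =>
    have hprev := ih fun t ht ↦ hstep t (Icc_subset_Icc_right (by omega) ht)
    have hlast := hstep (n + 1) (by simp)
    have hsucc := ftrlObjective_succ c h η n (P (n + 1))
    rw [sum_Icc_succ_top (by omega), sum_Icc_succ_top (by omega)]
    linarith

end FTRL

theorem regret_bound_FTRL_general
    {V : Type*} [NormedAddCommGroup V] [NormedSpace ℝ V]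
    (D : Set V) (hDconv : Convex ℝ D)
    (α : ℝ) (hα : 0 < α)
    (h : V → ℝ)
    (hstrong : ∀ P ∈ D, ∀ P' ∈ D, ∀ l : ℝ, l ∈ Set.Icc (0 : ℝ) 1 →
      h (l • P + (1 - l) • P') ≤ l * h P + (1 - l) * h P'
        - α * l * (1 - l) / 2 * ‖P - P'‖ ^ 2)
    (n : ℕ) (c : ℕ → V →L[ℝ] ℝ) (η : ℝ) (hη : 0 < η)
    (P : ℕ → V) (hPmem : ∀ t ∈ Finset.Icc 1 (n + 1), P t ∈ D)
    (hP1min : ∀ v ∈ D, h (P 1) ≤ h v)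
    (hPmin : ∀ t ∈ Finset.Icc 1 n, ∀ v ∈ D,
      (∑ s ∈ Finset.Icc 1 t, c s (P (t + 1))) + h (P (t + 1)) / η
        ≤ (∑ s ∈ Finset.Icc 1 t, c s v) + h v / η)
    (Pstar : V) (hPstar : Pstar ∈ D) :
    ∑ t ∈ Finset.Icc 1 n, (c t (P t) - c t Pstar)
      ≤ (h Pstar - h (P 1)) / η + η / (2 * α) * ∑ t ∈ Finset.Icc 1 n, ‖c t‖ ^ 2 := by
  have hh : StrongConvexOn D α h := strongConvexOn_of_forall_mem_Icc hDconv hstrong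
  have hmin : ∀ m ≤ n, IsMinOn (ftrlObjective c h η m) D (P (m + 1)) := by
    rintro (_ | m) hm v hv
    · simpa [ftrlObjective_zero] using div_le_div_of_nonneg_right (hP1min v hv) hη.le
    · exact hPmin (m + 1) (mem_Icc.2 ⟨by omega, hm⟩) v hv
  have hstep : ∀ t ∈ Icc 1 n, ftrlObjective c h η t (P t)
      ≤ ftrlObjective c h η t (P (t + 1)) + η / (2 * α) * ‖c t‖ ^ 2 := by
    intro t ht
    obtain ⟨m, rfl⟩ : ∃ m, t = m + 1 := ⟨t - 1, by grind⟩
    obtain ⟨ht₁, ht₂⟩ := mem_Icc.1 ht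
    exact ftrlObjective_succ_le_of_isMinOn hh hα hη (hPmem (m + 1) (mem_Icc.2 ⟨ht₁, by omega⟩))
      (hmin m (by omega)) (hPmem (m + 2) (mem_Icc.2 ⟨by omega, by omega⟩))
  have hbtl := sum_apply_le_ftrlObjective n hstep
  have hopt : ftrlObjective c h η n (P (n + 1)) ≤ ftrlObjective c h η n Pstar :=
    hmin n le_rfl hPstar
  rw [ftrlObjective_zero] at hbtl
  simp only [ftrlObjective] at hbtl hopt
  rw [sum_sub_distrib, sub_div, mul_sum]
  linarith

/-- **Regret bound for follow-the-regularized-leader.** Let `V` be a real normed vector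
space, `D ⊆ V` nonempty convex, `α > 0`, and `h : V → ℝ` `α`-strongly convex on `D`.
Let `c 1, …, c n ∈ V*` be continuous linear functionals, `η > 0`, suppose `P 1 ∈ D`
minimizes `h` over `D` and each `P (t+1) ∈ D` minimizes `P ↦ ∑_{s≤t} c s P + h P / η`
over `D`. Then for every `P* ∈ D`,
`∑ₜ (c t (P t) − c t P*) ≤ (h P* − h (P 1))/η + (η/(2α)) ∑ₜ ‖c t‖²`. -/
theorem regret_bound_FTRL
    {V : Type*} [NormedAddCommGroup V] [NormedSpace ℝ V]
    (D : Set V) (hDne : D.Nonempty) (hDconv : Convex ℝ D)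
    (α : ℝ) (hα : 0 < α)
    (h : V → ℝ)
    (hstrong : ∀ P ∈ D, ∀ P' ∈ D, ∀ l : ℝ, l ∈ Set.Icc (0 : ℝ) 1 →
      h (l • P + (1 - l) • P') ≤ l * h P + (1 - l) * h P'
        - α * l * (1 - l) / 2 * ‖P - P'‖ ^ 2)
    (n : ℕ) (c : ℕ → V →L[ℝ] ℝ) (η : ℝ) (hη : 0 < η)
    (P : ℕ → V) (hPmem : ∀ t ∈ Finset.Icc 1 (n + 1), P t ∈ D)
    (hP1min : ∀ v ∈ D, h (P 1) ≤ h v)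
    (hPmin : ∀ t ∈ Finset.Icc 1 n, ∀ v ∈ D,
      (∑ s ∈ Finset.Icc 1 t, c s (P (t + 1))) + h (P (t + 1)) / η
        ≤ (∑ s ∈ Finset.Icc 1 t, c s v) + h v / η)
    (Pstar : V) (hPstar : Pstar ∈ D) :
    ∑ t ∈ Finset.Icc 1 n, (c t (P t) - c t Pstar)
      ≤ (h Pstar - h (P 1)) / η + η / (2 * α) * ∑ t ∈ Finset.Icc 1 n, ‖c t‖ ^ 2 :=
  regret_bound_FTRL_general D hDconv α hα h hstrong n c η hη P hPmem hP1min hPmin Pstar hPstar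
end
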